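/- (Monotonicity identity for sn_κ^{n−1} F' and positivity of F') Let κ ≤ 0, let n ≥ 2 be an integer, and let F solve the ODE of the paper with F(0) = 0, F'(0) = 1, and F > 0 on (0,∞). Then for every r > 0 one has d/dr ( sn_κ(r)^{n−1} F'(r) ) = (n−1) sn_κ(r)^{n−3} F(r) > 0; consequently sn_κ(r)^{n−1} F'(r) is strictly increasing on (0,∞) and F'(r) > 0 for every r > 0. -/

import Mathlib

open Set

/-! The substitution `F'' = (n-1) F / sn² - (n-1) (sn'/sn) F'` from the ODE makes the two terms
of `(sn^{n-1} F')' = (n-1) sn^{n-2} sn' F' + sn^{n-1} F''` containing `F'` cancel, leaving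
`(n-1) sn^{n-3} F`, which is positive where `sn > 0` and `F > 0`. So `sn^{n-1} F'` is strictly
increasing on `(0,∞)`. If `F'(r) ≤ 0` for some `r > 0`, monotonicity would give `F' ≤ 0` on
`(0,r)`, hence `F(r) ≤ F(0) = 0`, contradicting `F(r) > 0`. -/

noncomputable def snk (κ : ℝ) (t : ℝ) : ℝ :=
  if κ = 0 then t else Real.sinh (Real.sqrt (-κ) * t) / Real.sqrt (-κ)

theorem differentiable_snk (κ : ℝ) : Differentiable ℝ (snk κ) := by
  unfold snk
  split_ifs
  · exact differentiable_id
  · fun_prop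

theorem snk_pos {κ : ℝ} (hκ : κ ≤ 0) {r : ℝ} (hr : 0 < r) : 0 < snk κ r := by
  rcases hκ.lt_or_eq with hκ | rfl
  · have ha : 0 < Real.sqrt (-κ) := Real.sqrt_pos.2 (neg_pos.2 hκ)
    simp only [snk, hκ.ne, if_false]
    exact div_pos (Real.sinh_pos_iff.2 (mul_pos ha hr)) ha
  · simpa [snk] using hr

theorem rpow_natCast_sub_three {s : ℝ} (hs : 0 < s) {n : ℕ} (hn : 1 ≤ n) :
    s ^ ((n : ℝ) - 3) = s ^ (n - 1) / s ^ 2 := by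
  rw [eq_div_iff (by positivity), ← Real.rpow_natCast s (n - 1), ← Real.rpow_natCast s 2,
    ← Real.rpow_add hs, Nat.cast_sub hn]
  congr 1
  push_cast
  ring

theorem hasDerivAt_pow_mul_deriv_of_ode {s F : ℝ → ℝ} {n : ℕ} {r : ℝ} (hn : 1 ≤ n)
    (hs : 0 < s r) (hsd : DifferentiableAt ℝ s r) (hFd : DifferentiableAt ℝ (deriv F) r)
    (hode : deriv (deriv F) r + ((n : ℝ) - 1) * (deriv s r / s r) * deriv F r
      - (((n : ℝ) - 1) / s r ^ 2) * F r = 0) :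
    HasDerivAt (fun t => s t ^ (n - 1) * deriv F t)
      (((n : ℝ) - 1) * s r ^ ((n : ℝ) - 3) * F r) r := by
  refine ((hsd.hasDerivAt.pow (n - 1)).mul hFd.hasDerivAt).congr_deriv ?_
  rw [rpow_natCast_sub_three hs hn]
  obtain ⟨m, rfl⟩ : ∃ m, n = m + 1 := ⟨n - 1, by omega⟩
  simp only [Nat.add_sub_cancel, Nat.cast_add, Nat.cast_one, add_sub_cancel_right,
    Pi.pow_apply] at hode ⊢
  have hF'' : deriv (deriv F) r
      = (m : ℝ) / s r ^ 2 * F r - (m : ℝ) * (deriv s r / s r) * deriv F r := by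
    linarith
  rw [hF'']
  rcases m with _ | k
  · simp
  · rw [Nat.add_sub_cancel, pow_succ]
    field_simp
    ring

theorem deriv_pos_of_monotoneOn_mul_deriv {F w : ℝ → ℝ} {a r : ℝ} (har : a < r)
    (hFc : ContinuousOn F (Icc a r)) (hFd : DifferentiableOn ℝ F (Ioo a r))
    (hFar : F a < F r) (hw : ∀ x ∈ Ioc a r, 0 < w x)
    (hmono : MonotoneOn (fun x => w x * deriv F x) (Ioc a r)) : 0 < deriv F r := by
  by_contra! hr
  have hr_mem : r ∈ Ioc a r := right_mem_Ioc.2 har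
  have hnonpos : ∀ x ∈ Ioo a r, deriv F x ≤ 0 := fun x hx =>
    nonpos_of_mul_nonpos_right
      ((hmono (Ioo_subset_Ioc_self hx) hr_mem hx.2.le).trans
        (mul_nonpos_of_nonneg_of_nonpos (hw r hr_mem).le hr))
      (hw x (Ioo_subset_Ioc_self hx))
  have hanti : AntitoneOn F (Icc a r) := by
    refine antitoneOn_of_deriv_nonpos (convex_Icc a r) hFc ?_ ?_ <;> rw [interior_Icc]
    exacts [hFd, hnonpos]
  have := hanti (left_mem_Icc.2 har.le) (right_mem_Icc.2 har.le) har.le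
  linarith

theorem snk_pow_mul_deriv_strictMono_general
    (κ : ℝ) (hκ : κ ≤ 0) (n : ℕ) (hn : 2 ≤ n) (F : ℝ → ℝ)
    (hFc : ContinuousOn F (Ici 0))
    (hF2 : ContDiffOn ℝ 2 F (Ioi 0))
    (hF0 : F 0 = 0)
    (hODE : ∀ r > 0, deriv (deriv F) r
      + ((n : ℝ) - 1) * (deriv (snk κ) r / snk κ r) * deriv F r
      - (((n : ℝ) - 1) / (snk κ r) ^ 2) * F r = 0)
    (hFpos : ∀ r > 0, 0 < F r) :
    (∀ r > 0, HasDerivAt (fun s => snk κ s ^ (n - 1) * deriv F s)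
        (((n : ℝ) - 1) * snk κ r ^ ((n : ℝ) - 3) * F r) r ∧
      0 < ((n : ℝ) - 1) * snk κ r ^ ((n : ℝ) - 3) * F r) ∧
    StrictMonoOn (fun s => snk κ s ^ (n - 1) * deriv F s) (Ioi 0) ∧
    ∀ r > 0, 0 < deriv F r := by
  have hF'd : ∀ r > 0, DifferentiableAt ℝ (deriv F) r := fun r hr =>
    ((hF2.deriv_of_isOpen isOpen_Ioi (m := 1) (by norm_num)).differentiableOn
      one_ne_zero).differentiableAt (isOpen_Ioi.mem_nhds hr)
  have hderiv : ∀ r > 0, HasDerivAt (fun s => snk κ s ^ (n - 1) * deriv F s)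
      (((n : ℝ) - 1) * snk κ r ^ ((n : ℝ) - 3) * F r) r := fun r hr =>
    hasDerivAt_pow_mul_deriv_of_ode (by omega) (snk_pos hκ hr) (differentiable_snk κ r)
      (hF'd r hr) (hODE r hr)
  have hpos : ∀ r > 0, 0 < ((n : ℝ) - 1) * snk κ r ^ ((n : ℝ) - 3) * F r := fun r hr => by
    have hn' : (2 : ℝ) ≤ n := by exact_mod_cast hn
    exact mul_pos (mul_pos (by linarith) (Real.rpow_pos_of_pos (snk_pos hκ hr) _)) (hFpos r hr)
  have hmono : StrictMonoOn (fun s => snk κ s ^ (n - 1) * deriv F s) (Ioi 0) :=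
    strictMonoOn_of_deriv_pos (convex_Ioi 0)
      (fun x hx => (hderiv x hx).continuousAt.continuousWithinAt)
      (fun x hx => by
        rw [interior_Ioi] at hx
        rw [(hderiv x hx).deriv]
        exact hpos x hx)
  refine ⟨fun r hr => ⟨hderiv r hr, hpos r hr⟩, hmono, fun r hr => ?_⟩
  exact deriv_pos_of_monotoneOn_mul_deriv (w := fun x => snk κ x ^ (n - 1)) hr
    (hFc.mono Icc_subset_Ici_self) ((hF2.differentiableOn (by norm_num)).mono Ioo_subset_Ioi_self)
    (by rw [hF0]; exact hFpos r hr) (fun x hx => pow_pos (snk_pos hκ hx.1) _)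
    (hmono.monotoneOn.mono Ioc_subset_Ioi_self)

/-- Monotonicity identity for `sn_κ^{n-1} F'` and positivity of `F'`:
`(sn_κ^{n-1} F')'(r) = (n-1) sn_κ(r)^{n-3} F(r) > 0`, so `sn_κ^{n-1} F'` is strictly
increasing on `(0,∞)` and `F' > 0` on `(0,∞)`. -/
theorem snk_pow_mul_deriv_strictMono
    (κ : ℝ) (hκ : κ ≤ 0) (n : ℕ) (hn : 2 ≤ n) (F : ℝ → ℝ)
    (hFc : ContinuousOn F (Ici 0))
    (hF2 : ContDiffOn ℝ 2 F (Ioi 0))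
    (hF0 : F 0 = 0)
    (hF'0 : HasDerivWithinAt F 1 (Ici 0) 0)
    (hODE : ∀ r > 0, deriv (deriv F) r
      + ((n : ℝ) - 1) * (deriv (snk κ) r / snk κ r) * deriv F r
      - (((n : ℝ) - 1) / (snk κ r) ^ 2) * F r = 0)
    (hFpos : ∀ r > 0, 0 < F r) :
    (∀ r > 0, HasDerivAt (fun s => snk κ s ^ (n - 1) * deriv F s)
        (((n : ℝ) - 1) * snk κ r ^ ((n : ℝ) - 3) * F r) r ∧
      0 < ((n : ℝ) - 1) * snk κ r ^ ((n : ℝ) - 3) * F r) ∧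
    StrictMonoOn (fun s => snk κ s ^ (n - 1) * deriv F s) (Ioi 0) ∧
    ∀ r > 0, 0 < deriv F r :=
  snk_pow_mul_deriv_strictMono_general κ hκ n hn F hFc hF2 hF0 hODE hFpos
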